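/- Let S be a nonempty countable family of linear orders, let S' be a subfamily of S, and let S'' be a nonempty countable family of linear orders each member of which is of the form t₁ + Ξ(S) + t₂ for some t₁, t₂ ∈ S ∪ {𝟘} (where 𝟘 is the empty linear order). Then Ξ(S' ∪ S'') is order isomorphic to Ξ(S). -/

import Mathlib

universe u

/-- A coloring `χ : L → ι` of a linear order `L` is *dense* if for every color `i`
and all `x < x'` in `L` there is `y` with `x < y < x'` and `χ y = i`. -/
def DenseColoring {L : Type*} [LinearOrder L] {ι : Type*} (χ : L → ι) : Prop :=
  ∀ i : ι, ∀ x x' : L, x < x' → ∃ y : L, x < y ∧ y < x' ∧ χ y = i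

/-- Extend a family of linear orders indexed by `ι` to one indexed by `Option ι`
by sending `none` to the empty linear order `𝟘`. -/
def OptExt {ι : Type*} (F : ι → Type u) : Option ι → Type u
  | none => PEmpty
  | some i => F i

instance {ι : Type*} (F : ι → Type u) [∀ i, LinearOrder (F i)] :
    ∀ o : Option ι, LinearOrder (OptExt F o)
  | none => LinearOrder.lift' (fun _ => PUnit.unit.{1}) (fun a => PEmpty.elim a)
  | some i => inferInstanceAs (LinearOrder (F i))

/-- The family `S' ∪ S''`: the subfamily of `S = (F i)_{i : ι}` given by the subset
`s' ⊆ ι`, together with the family indexed by `J` whose `j`-th member is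
`t₁ + Ξ(S) + t₂` where `t₁ = OptExt F (a j)` and `t₂ = OptExt F (b j)`. -/
def CombinedFamily {ι : Type*} (F : ι → Type u) (χ : ℚ → ι) (s' : Set ι)
    {J : Type*} (a b : J → Option ι) : ↥s' ⊕ J → Type u
  | Sum.inl i => F i
  | Sum.inr j => (OptExt F (a j) ⊕ₗ (Σₗ p : ℚ, F (χ p))) ⊕ₗ OptExt F (b j)

instance {ι : Type*} (F : ι → Type u) [∀ i, LinearOrder (F i)] (χ : ℚ → ι)
    (s' : Set ι) {J : Type*} (a b : J → Option ι) :
    ∀ x : ↥s' ⊕ J, LinearOrder (CombinedFamily F χ s' a b x)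
  | Sum.inl i => inferInstanceAs (LinearOrder (F i))
  | Sum.inr j =>
      inferInstanceAs (LinearOrder ((OptExt F (a j) ⊕ₗ (Σₗ p : ℚ, F (χ p))) ⊕ₗ OptExt F (b j)))


noncomputable section
namespace ShuffleAux

/-- Order isomorphism between two empty linear orders. -/
def emptyIso (A B : Type*) [Preorder A] [Preorder B] [IsEmpty A] [IsEmpty B] : A ≃o B :=
  ⟨Equiv.equivOfIsEmpty A B, @fun a => isEmptyElim a⟩

/-- congruence of lexicographic sigma types -/
def sigmaCongrIso {κ : Type*} [LinearOrder κ] {A B : κ → Type*}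
    [∀ k, LinearOrder (A k)] [∀ k, LinearOrder (B k)] (e : ∀ k, A k ≃o B k) :
    (Σₗ k, A k) ≃o (Σₗ k, B k) :=
  StrictMono.orderIsoOfSurjective (fun x => toLex ⟨(ofLex x).1, e _ (ofLex x).2⟩)
    (by
      rintro ⟨k, x⟩ ⟨k', x'⟩ h
      rcases Sigma.Lex.lt_def.mp h with h1 | ⟨h1, h2⟩
      · exact Sigma.Lex.lt_def.mpr (Or.inl h1)
      · dsimp only at h1
        subst h1
        exact Sigma.Lex.lt_def.mpr (Or.inr ⟨rfl, (e k).strictMono h2⟩))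
    (by
      rintro ⟨k, y⟩
      exact ⟨toLex ⟨k, (e k).symm y⟩,
        congrArg (fun z => toLex (⟨k, z⟩ : Σ k, B k)) ((e k).apply_symm_apply y)⟩)

/-- reindexing a lexicographic sigma type along an order isomorphism -/
def sigmaReindexIso {κ κ' : Type*} [LinearOrder κ] [LinearOrder κ'] (e : κ ≃o κ')
    (A : κ' → Type*) [∀ k, LinearOrder (A k)] :
    (Σₗ k, A (e k)) ≃o (Σₗ k', A k') :=
  StrictMono.orderIsoOfSurjective (fun x => toLex ⟨e (ofLex x).1, (ofLex x).2⟩)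
    (by
      rintro ⟨k, x⟩ ⟨k', x'⟩ h
      rcases Sigma.Lex.lt_def.mp h with h1 | ⟨h1, h2⟩
      · exact Sigma.Lex.lt_def.mpr (Or.inl (e.strictMono h1))
      · dsimp only at h1
        subst h1
        exact Sigma.Lex.lt_def.mpr (Or.inr ⟨rfl, h2⟩))
    (by
      rintro ⟨k', y⟩
      exact ⟨toLex ⟨e.symm k', (e.apply_symm_apply k').symm ▸ y⟩,
        Sigma.ext (e.apply_symm_apply k') (eqRec_heq _ y)⟩)

/-- associativity: a sigma of sigmas is a sigma over the sigma of indices -/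
def sigmaAssocIso {κ : Type*} [LinearOrder κ] {B : κ → Type*} [∀ k, LinearOrder (B k)]
    (C : ∀ k, B k → Type*) [∀ k v, LinearOrder (C k v)] :
    (Σₗ k, (Σₗ v : B k, C k v)) ≃o (Σₗ x : (Σₗ k, B k), C (ofLex x).1 (ofLex x).2) :=
  StrictMono.orderIsoOfSurjective
    (fun x => toLex ⟨toLex ⟨(ofLex x).1, (ofLex (ofLex x).2).1⟩, (ofLex (ofLex x).2).2⟩)
    (by
      rintro ⟨k, ⟨w, c⟩⟩ ⟨k', ⟨w', c'⟩⟩ h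
      rcases Sigma.Lex.lt_def.mp h with h1 | ⟨h1, h2⟩
      · exact Sigma.Lex.lt_def.mpr (Or.inl (Sigma.Lex.lt_def.mpr (Or.inl h1)))
      · dsimp only at h1
        subst h1
        rcases Sigma.Lex.lt_def.mp h2 with h3 | ⟨h3, h4⟩
        · exact Sigma.Lex.lt_def.mpr (Or.inl (Sigma.Lex.lt_def.mpr (Or.inr ⟨rfl, h3⟩)))
        · dsimp only at h3
          subst h3
          exact Sigma.Lex.lt_def.mpr (Or.inr ⟨rfl, h4⟩))
    (by
      rintro ⟨⟨k, w⟩, c⟩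
      exact ⟨toLex ⟨k, toLex ⟨w, c⟩⟩, rfl⟩)

/-- a sigma over a lexicographic sum splits as a lexicographic sum of sigmas -/
def sigmaSumIso {X Y : Type*} [LinearOrder X] [LinearOrder Y] (G : X ⊕ₗ Y → Type*)
    [∀ v, LinearOrder (G v)] :
    (Σₗ v : X ⊕ₗ Y, G v) ≃o
      ((Σₗ x : X, G (toLex (Sum.inl x))) ⊕ₗ (Σₗ y : Y, G (toLex (Sum.inr y)))) :=
  StrictMono.orderIsoOfSurjective
    (fun z =>
      match z with
      | ⟨Sum.inl x, g⟩ => toLex (Sum.inl (toLex ⟨x, g⟩))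
      | ⟨Sum.inr y, g⟩ => toLex (Sum.inr (toLex ⟨y, g⟩)))
    (by
      rintro ⟨(x | y), g⟩ ⟨(x' | y'), g'⟩ h <;>
        rcases Sigma.Lex.lt_def.mp h with h1 | ⟨h1, h2⟩
      · exact Sum.Lex.inl_lt_inl_iff.mpr
          (Sigma.Lex.lt_def.mpr (Or.inl (Sum.Lex.inl_lt_inl_iff.mp h1)))
      · dsimp only at h1; cases h1
        exact Sum.Lex.inl_lt_inl_iff.mpr (Sigma.Lex.lt_def.mpr (Or.inr ⟨rfl, h2⟩))
      · exact Sum.Lex.inl_lt_inr _ _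
      · exact absurd h1 (by simp [Sum.Lex.lt_def])
      · exact absurd h1 Sum.Lex.not_inr_lt_inl
      · exact absurd h1 (by simp)
      · exact Sum.Lex.inr_lt_inr_iff.mpr
          (Sigma.Lex.lt_def.mpr (Or.inl (Sum.Lex.inr_lt_inr_iff.mp h1)))
      · dsimp only at h1; cases h1
        exact Sum.Lex.inr_lt_inr_iff.mpr (Sigma.Lex.lt_def.mpr (Or.inr ⟨rfl, h2⟩)))
    (by
      rintro (⟨x, g⟩ | ⟨y, g⟩)
      · exact ⟨toLex ⟨toLex (Sum.inl x), g⟩, rfl⟩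
      · exact ⟨toLex ⟨toLex (Sum.inr y), g⟩, rfl⟩)

/-- a sigma over `PUnit` with constant fiber -/
def sigmaPUnitIso (G : Type*) [LinearOrder G] : (Σₗ _ : PUnit.{v+1}, G) ≃o G :=
  StrictMono.orderIsoOfSurjective (fun x => (ofLex x).2)
    (by
      rintro ⟨u, g⟩ ⟨u', g'⟩ h
      rcases Sigma.Lex.lt_def.mp h with h1 | ⟨h1, h2⟩
      · exact absurd h1 (by simp)
      · exact h2)
    (fun g => ⟨toLex ⟨PUnit.unit, g⟩, rfl⟩)

/-- congruence of lexicographic sums of orders -/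
def sumLexCongrIso {A B A' B' : Type*} [LinearOrder A] [LinearOrder B] [LinearOrder A']
    [LinearOrder B'] (e : A ≃o A') (f : B ≃o B') : (A ⊕ₗ B) ≃o (A' ⊕ₗ B') :=
  StrictMono.orderIsoOfSurjective (fun x => toLex (Sum.map e f (ofLex x)))
    (by
      rintro (a | b) (a' | b') h
      · exact Sum.Lex.inl_lt_inl_iff.mpr (e.strictMono (Sum.Lex.inl_lt_inl_iff.mp h))
      · exact Sum.Lex.inl_lt_inr _ _
      · exact absurd h Sum.Lex.not_inr_lt_inl
      · exact Sum.Lex.inr_lt_inr_iff.mpr (f.strictMono (Sum.Lex.inr_lt_inr_iff.mp h)))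
    (by
      rintro (a' | b')
      · exact ⟨toLex (Sum.inl (e.symm a')), by simp; rfl⟩
      · exact ⟨toLex (Sum.inr (f.symm b')), by simp; rfl⟩)

/-- transport along an equality of indices -/
def isoOfEq {ι : Type*} (F : ι → Type u) [∀ i, LinearOrder (F i)] {i j : ι} (h : i = j) :
    F i ≃o F j := h ▸ OrderIso.refl (F i)

open Order

variable {ι α β : Type*} [LinearOrder α] [LinearOrder β]

theorem colorExistsGt {h : β → ι} (hh : DenseColoring h) [NoMaxOrder β]
    (i : ι) (x : β) : ∃ y, x < y ∧ h y = i := by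
  obtain ⟨z, hz⟩ := exists_gt x
  obtain ⟨y, h1, _, h3⟩ := hh i x z hz
  exact ⟨y, h1, h3⟩

theorem colorExistsLt {h : β → ι} (hh : DenseColoring h) [NoMinOrder β]
    (i : ι) (x : β) : ∃ y, y < x ∧ h y = i := by
  obtain ⟨z, hz⟩ := exists_lt x
  obtain ⟨y, _, h2, h3⟩ := hh i z x hz
  exact ⟨y, h2, h3⟩

theorem colorExists {h : β → ι} (hh : DenseColoring h) [Nonempty β]
    [NoMaxOrder β] (i : ι) : ∃ y, h y = i := by
  obtain ⟨x⟩ := ‹Nonempty β›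
  obtain ⟨y, _, h3⟩ := colorExistsGt hh i x
  exact ⟨y, h3⟩

/-- colored version of `Order.exists_between_finsets` -/
theorem exists_between_finsets_colored {h : β → ι} (hh : DenseColoring h)
    [NoMinOrder β] [NoMaxOrder β] [Nonempty β] (i : ι) (lo hi : Finset β)
    (lo_lt_hi : ∀ x ∈ lo, ∀ y ∈ hi, x < y) :
    ∃ m : β, (∀ x ∈ lo, x < m) ∧ (∀ y ∈ hi, m < y) ∧ h m = i := by
  by_cases nlo : lo.Nonempty <;> by_cases nhi : hi.Nonempty
  · obtain ⟨m, hm1, hm2, hm3⟩ :=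
      hh i _ _ (lo_lt_hi _ (Finset.max'_mem _ nlo) _ (Finset.min'_mem _ nhi))
    exact ⟨m, fun x hx => lt_of_le_of_lt (Finset.le_max' lo x hx) hm1,
      fun y hy => lt_of_lt_of_le hm2 (Finset.min'_le hi y hy), hm3⟩
  · obtain ⟨m, hm1, hm3⟩ := colorExistsGt hh i (Finset.max' lo nlo)
    exact ⟨m, fun x hx => lt_of_le_of_lt (Finset.le_max' lo x hx) hm1,
      fun y hy => (nhi ⟨y, hy⟩).elim, hm3⟩
  · obtain ⟨m, hm2, hm3⟩ := colorExistsLt hh i (Finset.min' hi nhi)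
    exact ⟨m, fun x hx => (nlo ⟨x, hx⟩).elim,
      fun y hy => lt_of_lt_of_le hm2 (Finset.min'_le hi y hy), hm3⟩
  · obtain ⟨m, hm3⟩ := colorExists hh i
    exact ⟨m, fun x hx => (nlo ⟨x, hx⟩).elim, fun y hy => (nhi ⟨y, hy⟩).elim, hm3⟩

variable (α β) in
/-- Partial color-preserving order isomorphisms on finite sets. -/
def CPartialIso (g : α → ι) (h : β → ι) : Type _ :=
  { f : Finset (α × β) //
    (∀ p ∈ f, ∀ q ∈ f, cmp (Prod.fst p) (Prod.fst q) = cmp (Prod.snd p) (Prod.snd q)) ∧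
      ∀ p ∈ f, h (Prod.snd p) = g (Prod.fst p) }

namespace CPartialIso

variable {g : α → ι} {h : β → ι}

instance : Inhabited (CPartialIso α β g h) :=
  ⟨⟨∅, fun _p hp => (Finset.notMem_empty _ hp).elim,
    fun _p hp => (Finset.notMem_empty _ hp).elim⟩⟩

instance : Preorder (CPartialIso α β g h) := Subtype.preorder _

theorem exists_across (hh : DenseColoring h) [NoMinOrder β] [NoMaxOrder β] [Nonempty β]
    (f : CPartialIso α β g h) (a : α) :
    ∃ b : β, h b = g a ∧ ∀ p ∈ f.val, cmp (Prod.fst p) a = cmp (Prod.snd p) b := by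
  by_cases hex : ∃ b, (a, b) ∈ f.val
  · obtain ⟨b, hb⟩ := hex
    exact ⟨b, f.prop.2 _ hb, fun p hp => f.prop.1 _ hp _ hb⟩
  have key :
      ∀ x ∈ (f.val.filter fun p : α × β => p.fst < a).image Prod.snd,
        ∀ y ∈ (f.val.filter fun p : α × β => a < p.fst).image Prod.snd, x < y := by
    intro x hx y hy
    rw [Finset.mem_image] at hx hy
    rcases hx with ⟨p, hp1, rfl⟩
    rcases hy with ⟨q, hq1, rfl⟩
    rw [Finset.mem_filter] at hp1 hq1
    rw [← lt_iff_lt_of_cmp_eq_cmp (f.prop.1 _ hp1.1 _ hq1.1)]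
    exact lt_trans hp1.right hq1.right
  obtain ⟨b, hb1, hb2, hb3⟩ := exists_between_finsets_colored hh (g a) _ _ key
  refine ⟨b, hb3, ?_⟩
  rintro ⟨p1, p2⟩ hp
  have hne : p1 ≠ a := fun he => hex ⟨p2, he ▸ hp⟩
  cases' lt_or_gt_of_ne hne with hl hr
  · have h2 : p1 < a ∧ p2 < b :=
      ⟨hl, hb1 _ (Finset.mem_image.mpr ⟨(p1, p2), Finset.mem_filter.mpr ⟨hp, hl⟩, rfl⟩)⟩
    rw [← cmp_eq_lt_iff, ← cmp_eq_lt_iff] at h2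
    exact h2.1.trans h2.2.symm
  · have h2 : a < p1 ∧ b < p2 :=
      ⟨hr, hb2 _ (Finset.mem_image.mpr ⟨(p1, p2), Finset.mem_filter.mpr ⟨hp, hr⟩, rfl⟩)⟩
    rw [← cmp_eq_gt_iff, ← cmp_eq_gt_iff] at h2
    exact h2.1.trans h2.2.symm

theorem exists_across' (hg : DenseColoring g) [NoMinOrder α] [NoMaxOrder α] [Nonempty α]
    (f : CPartialIso α β g h) (b : β) :
    ∃ a : α, g a = h b ∧ ∀ p ∈ f.val, cmp (Prod.snd p) b = cmp (Prod.fst p) a := by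
  by_cases hex : ∃ a, (a, b) ∈ f.val
  · obtain ⟨a, ha⟩ := hex
    exact ⟨a, (f.prop.2 _ ha).symm, fun p hp => (f.prop.1 _ hp _ ha).symm⟩
  have key :
      ∀ x ∈ (f.val.filter fun p : α × β => p.snd < b).image Prod.fst,
        ∀ y ∈ (f.val.filter fun p : α × β => b < p.snd).image Prod.fst, x < y := by
    intro x hx y hy
    rw [Finset.mem_image] at hx hy
    rcases hx with ⟨p, hp1, rfl⟩
    rcases hy with ⟨q, hq1, rfl⟩
    rw [Finset.mem_filter] at hp1 hq1
    rw [lt_iff_lt_of_cmp_eq_cmp (f.prop.1 _ hp1.1 _ hq1.1)]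
    exact lt_trans hp1.right hq1.right
  obtain ⟨c, hc1, hc2, hc3⟩ := exists_between_finsets_colored hg (h b) _ _ key
  refine ⟨c, hc3, ?_⟩
  rintro ⟨p1, p2⟩ hp
  have hne : p2 ≠ b := fun he => hex ⟨p1, he ▸ hp⟩
  cases' lt_or_gt_of_ne hne with hl hr
  · have h2 : p2 < b ∧ p1 < c :=
      ⟨hl, hc1 _ (Finset.mem_image.mpr ⟨(p1, p2), Finset.mem_filter.mpr ⟨hp, hl⟩, rfl⟩)⟩
    rw [← cmp_eq_lt_iff, ← cmp_eq_lt_iff] at h2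
    exact h2.1.trans h2.2.symm
  · have h2 : b < p2 ∧ c < p1 :=
      ⟨hr, hc2 _ (Finset.mem_image.mpr ⟨(p1, p2), Finset.mem_filter.mpr ⟨hp, hr⟩, rfl⟩)⟩
    rw [← cmp_eq_gt_iff, ← cmp_eq_gt_iff] at h2
    exact h2.1.trans h2.2.symm

/-- partial isos defined at `a : α` form a cofinal set -/
def definedAtLeft (hh : DenseColoring h) [NoMinOrder β] [NoMaxOrder β] [Nonempty β] (a : α) :
    Cofinal (CPartialIso α β g h) where
  carrier := {f | ∃ b : β, (a, b) ∈ f.val}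
  isCofinal f := by
    obtain ⟨b, hb0, a_b⟩ := exists_across hh f a
    refine ⟨⟨insert (a, b) f.val, fun p hp q hq => ?_, fun p hp => ?_⟩,
      ⟨b, Finset.mem_insert_self _ _⟩, Finset.subset_insert _ _⟩
    · rw [Finset.mem_insert] at hp hq
      rcases hp with (rfl | pf) <;> rcases hq with (rfl | qf)
      · simp only [cmp_self_eq_eq]
      · rw [cmp_eq_cmp_symm]; exact a_b _ qf
      · exact a_b _ pf
      · exact f.prop.1 _ pf _ qf
    · rw [Finset.mem_insert] at hp
      rcases hp with rfl | pf
      · exact hb0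
      · exact f.prop.2 _ pf

/-- partial isos defined at `b : β` form a cofinal set -/
def definedAtRight (hg : DenseColoring g) [NoMinOrder α] [NoMaxOrder α] [Nonempty α] (b : β) :
    Cofinal (CPartialIso α β g h) where
  carrier := {f | ∃ a : α, (a, b) ∈ f.val}
  isCofinal f := by
    obtain ⟨a, ha0, b_a⟩ := exists_across' hg f b
    refine ⟨⟨insert (a, b) f.val, fun p hp q hq => ?_, fun p hp => ?_⟩,
      ⟨a, Finset.mem_insert_self _ _⟩, Finset.subset_insert _ _⟩
    · rw [Finset.mem_insert] at hp hq
      rcases hp with (rfl | pf) <;> rcases hq with (rfl | qf)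
      · simp only [cmp_self_eq_eq]
      · rw [cmp_eq_cmp_symm] at *
        exact (b_a _ qf).symm
      · exact (b_a _ pf).symm
      · exact f.prop.1 _ pf _ qf
    · rw [Finset.mem_insert] at hp
      rcases hp with rfl | pf
      · exact ha0.symm
      · exact f.prop.2 _ pf

end CPartialIso

open CPartialIso in
/-- Colored Cantor back-and-forth: two countable dense colored linear orders without
endpoints with dense colorings by the same colors are isomorphic by a color-preserving map. -/
theorem iso_colored [Countable α] [NoMinOrder α] [NoMaxOrder α] [Nonempty α]
    [Countable β] [NoMinOrder β] [NoMaxOrder β] [Nonempty β]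
    {g : α → ι} {h : β → ι} (hg : DenseColoring g) (hh : DenseColoring h) :
    ∃ e : α ≃o β, ∀ x, h (e x) = g x := by
  cases nonempty_encodable α
  cases nonempty_encodable β
  let to_cofinal : α ⊕ β → Cofinal (CPartialIso α β g h) := fun p =>
    Sum.recOn p (definedAtLeft hh) (definedAtRight hg)
  let our_ideal : Ideal (CPartialIso α β g h) := idealOfCofinals default to_cofinal
  have hF : ∀ a : α, ∃ b, ∃ f ∈ our_ideal, (a, b) ∈ f.val := by
    intro a
    obtain ⟨f, ⟨b, hb⟩, hf⟩ := cofinal_meets_idealOfCofinals default to_cofinal (Sum.inl a)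
    exact ⟨b, f, hf, hb⟩
  have hG : ∀ b : β, ∃ a, ∃ f ∈ our_ideal, (a, b) ∈ f.val := by
    intro b
    obtain ⟨f, ⟨a, ha⟩, hf⟩ := cofinal_meets_idealOfCofinals default to_cofinal (Sum.inr b)
    exact ⟨a, f, hf, ha⟩
  choose F hF1 using hF
  choose G hG1 using hG
  have key : ∀ a b, cmp a (G b) = cmp (F a) b := by
    intro a b
    obtain ⟨f, hf, haf⟩ := hF1 a
    obtain ⟨f', hf', hbf⟩ := hG1 b
    rcases our_ideal.directed _ hf _ hf' with ⟨m, _, fm, gm⟩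
    exact m.prop.1 (a, _) (fm haf) (_, b) (gm hbf)
  refine ⟨OrderIso.ofCmpEqCmp F G key, ?_⟩
  intro a
  obtain ⟨f, _, haf⟩ := hF1 a
  exact f.prop.2 _ haf



/-! ### Block index structure -/

variable {ι : Type*}

/-- index blocks for options: one point or empty -/
abbrev OneOpt : Option ι → Type := OptExt fun _ => PUnit

/-- the color of the unique point of `OneOpt (some i)` -/
def optColor : ∀ o : Option ι, OneOpt o → ι
  | some i, _ => i
  | none, x => x.elim

theorem subsingleton_oneOpt : ∀ o : Option ι, Subsingleton (OneOpt (ι := ι) o)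
  | none => ⟨fun x => x.elim⟩
  | some _ => inferInstanceAs (Subsingleton PUnit)

variable {s' : Set ι} {J : Type*}

/-- The index order of the flattening of a combined-family block into `F`-blocks. -/
def BIdx (a b : J → Option ι) : ↥s' ⊕ J → Type
  | Sum.inl _ => PUnit
  | Sum.inr j => (OneOpt (a j) ⊕ₗ ℚ) ⊕ₗ OneOpt (b j)

instance (a b : J → Option ι) : ∀ c, LinearOrder (BIdx (s' := s') a b c)
  | Sum.inl _ => inferInstanceAs (LinearOrder PUnit)
  | Sum.inr j => inferInstanceAs (LinearOrder ((OneOpt (a j) ⊕ₗ ℚ) ⊕ₗ OneOpt (b j)))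

instance lexCountable {X : Type*} [inst : Countable X] : Countable (Lex X) := inst

theorem countable_oneOpt : ∀ o : Option ι, Countable (OneOpt (ι := ι) o)
  | none => inferInstanceAs (Countable PEmpty)
  | some _ => inferInstanceAs (Countable PUnit)

theorem countable_bidx (a b : J → Option ι) : ∀ c, Countable (BIdx (s' := s') a b c)
  | Sum.inl _ => inferInstanceAs (Countable PUnit)
  | Sum.inr j => by
      haveI := countable_oneOpt (ι := ι) (a j)
      haveI := countable_oneOpt (ι := ι) (b j)
      exact inferInstanceAs (Countable ((OneOpt (a j) ⊕ₗ ℚ) ⊕ₗ OneOpt (b j)))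

theorem nonempty_bidx (a b : J → Option ι) : ∀ c, Nonempty (BIdx (s' := s') a b c)
  | Sum.inl _ => ⟨PUnit.unit⟩
  | Sum.inr _ => ⟨toLex (Sum.inl (toLex (Sum.inr (0 : ℚ))))⟩

/-- the coloring of the flattened index order -/
def colorB (χ : ℚ → ι) (a b : J → Option ι) : ∀ c, BIdx (s' := s') a b c → ι
  | Sum.inl i, _ => i.1
  | Sum.inr j, v =>
    match ofLex v with
    | Sum.inl w =>
      match ofLex w with
      | Sum.inl u => optColor (a j) u
      | Sum.inr p => χ p
    | Sum.inr u => optColor (b j) u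

/-- within-block density of the coloring `colorB` -/
theorem blockDense {χ : ℚ → ι} (hχ : DenseColoring χ) (a b : J → Option ι) (i : ι)
    (c : ↥s' ⊕ J) (v v' : BIdx (s' := s') a b c) (hvv : v < v') :
    ∃ w, v < w ∧ w < v' ∧ colorB χ a b c w = i := by
  cases c with
  | inl i' =>
    cases v; cases v'
    exact absurd hvv (lt_irrefl _)
  | inr j =>
    have hmidlt : ∀ s s' : ℚ, s < s' →
        (toLex (Sum.inl (toLex (Sum.inr s))) :
          (OneOpt (a j) ⊕ₗ ℚ) ⊕ₗ OneOpt (b j)) < toLex (Sum.inl (toLex (Sum.inr s'))) :=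
      fun s s' h => Sum.Lex.inl_lt_inl_iff.mpr (Sum.Lex.inr_lt_inr_iff.mpr h)
    rcases v with (u1 | p) | u2 <;> rcases v' with (u1' | p') | u2'
    · exfalso
      haveI := subsingleton_oneOpt (ι := ι) (a j)
      have h1 : u1 < u1' :=
        Sum.Lex.inl_lt_inl_iff.mp (Sum.Lex.inl_lt_inl_iff.mp hvv)
      rw [Subsingleton.elim u1 u1'] at h1
      exact lt_irrefl _ h1
    · obtain ⟨s, _, hs2, hs3⟩ := hχ i (p' - 1) p' (by linarith)
      exact ⟨toLex (Sum.inl (toLex (Sum.inr s))),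
        Sum.Lex.inl_lt_inl_iff.mpr (Sum.Lex.inl_lt_inr _ _), hmidlt s p' hs2, hs3⟩
    · obtain ⟨s, _, _, hs3⟩ := hχ i 0 1 one_pos
      exact ⟨toLex (Sum.inl (toLex (Sum.inr s))),
        Sum.Lex.inl_lt_inl_iff.mpr (Sum.Lex.inl_lt_inr _ _), Sum.Lex.inl_lt_inr _ _, hs3⟩
    · exact absurd (Sum.Lex.inl_lt_inl_iff.mp hvv) Sum.Lex.not_inr_lt_inl
    · obtain ⟨s, hs1, hs2, hs3⟩ :=
        hχ i p p' (Sum.Lex.inr_lt_inr_iff.mp (Sum.Lex.inl_lt_inl_iff.mp hvv))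
      exact ⟨toLex (Sum.inl (toLex (Sum.inr s))), hmidlt p s hs1, hmidlt s p' hs2, hs3⟩
    · obtain ⟨s, hs1, _, hs3⟩ := hχ i p (p + 1) (lt_add_one p)
      exact ⟨toLex (Sum.inl (toLex (Sum.inr s))), hmidlt p s hs1,
        Sum.Lex.inl_lt_inr _ _, hs3⟩
    · exact absurd hvv Sum.Lex.not_inr_lt_inl
    · exact absurd hvv Sum.Lex.not_inr_lt_inl
    · exfalso
      haveI := subsingleton_oneOpt (ι := ι) (b j)
      have h1 : u2 < u2' := Sum.Lex.inr_lt_inr_iff.mp hvv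
      rw [Subsingleton.elim u2 u2'] at h1
      exact lt_irrefl _ h1

/-- every color occurs in every `inr`-block -/
theorem exists_colorB {χ : ℚ → ι} (hχ : DenseColoring χ) (a b : J → Option ι) {j : J}
    {c : ↥s' ⊕ J} (hc : c = Sum.inr j) (i : ι) :
    ∃ w : BIdx (s' := s') a b c, colorB χ a b c w = i := by
  subst hc
  obtain ⟨s, _, _, hs3⟩ := hχ i 0 1 one_pos
  exact ⟨toLex (Sum.inl (toLex (Sum.inr s))), hs3⟩

/-! ### The block isomorphisms -/

variable (F : ι → Type u) [∀ i, LinearOrder (F i)]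

/-- flattening the option part -/
def optIso : ∀ o : Option ι, (Σₗ v : OneOpt o, F (optColor o v)) ≃o OptExt F o
  | none =>
    letI : IsEmpty (Σₗ v : OneOpt (none : Option ι), F (optColor none v)) :=
      ⟨fun x => ((ofLex x).1 : PEmpty).elim⟩
    letI : IsEmpty (OptExt F (none : Option ι)) := ⟨fun x => (x : PEmpty).elim⟩
    emptyIso _ _
  | some i => sigmaPUnitIso (F i)

/-- flattening a block of the combined family -/
def blockIso (χ : ℚ → ι) (a b : J → Option ι) :
    ∀ c : ↥s' ⊕ J, CombinedFamily F χ s' a b c ≃o (Σₗ v : BIdx a b c, F (colorB χ a b c v))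
  | Sum.inl i => (sigmaPUnitIso (F i.1)).symm
  | Sum.inr j =>
    ((sigmaSumIso (G := fun v => F (colorB χ a b (Sum.inr j) v))).trans
      (sumLexCongrIso
        ((sigmaSumIso _).trans (sumLexCongrIso (optIso F (a j)) (OrderIso.refl _)))
        (optIso F (b j)))).symm

end ShuffleAux
end

/-- Let `S` be a nonempty countable family of linear orders (indexed by `ι` via `F`),
`S'` a subfamily of `S` (given by a subset `s'` of `ι`), and `S''` a nonempty countable
family (indexed by `J`) each of whose members is of the form `t₁ + Ξ(S) + t₂` with
`t₁, t₂ ∈ S ∪ {𝟘}` (given by `a b : J → Option ι`).  Then `Ξ(S' ∪ S'') ≅ Ξ(S)`. -/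
theorem shuffle_absorb {ι : Type*} [Nonempty ι] [Countable ι]
    (F : ι → Type u) [∀ i, LinearOrder (F i)]
    (χ : ℚ → ι) (hχ : DenseColoring χ)
    (s' : Set ι)
    {J : Type*} [Nonempty J] [Countable J]
    (a b : J → Option ι)
    (χ'' : ℚ → (↥s' ⊕ J)) (hχ'' : DenseColoring χ'') :
    Nonempty ((Σₗ q : ℚ, CombinedFamily F χ s' a b (χ'' q)) ≃o (Σₗ q : ℚ, F (χ q))) := by
  classical
  obtain ⟨j₀⟩ := ‹Nonempty J›
  haveI : ∀ q : ℚ, Nonempty (ShuffleAux.BIdx (s' := s') a b (χ'' q)) :=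
    fun q => ShuffleAux.nonempty_bidx a b _
  haveI : ∀ q : ℚ, Countable (ShuffleAux.BIdx (s' := s') a b (χ'' q)) :=
    fun q => ShuffleAux.countable_bidx a b _
  haveI : Countable (Σₗ q : ℚ, ShuffleAux.BIdx (s' := s') a b (χ'' q)) :=
    inferInstance
  haveI : Nonempty (Σₗ q : ℚ, ShuffleAux.BIdx (s' := s') a b (χ'' q)) :=
    ⟨toLex ⟨0, Classical.arbitrary _⟩⟩
  have gdense : DenseColoring
      (fun x : Σₗ q : ℚ, ShuffleAux.BIdx (s' := s') a b (χ'' q) =>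
        ShuffleAux.colorB χ a b (χ'' (ofLex x).1) (ofLex x).2) := by
    intro i x x' hlt
    obtain ⟨q, v⟩ := x
    obtain ⟨q', v'⟩ := x'
    rcases Sigma.Lex.lt_def.mp hlt with h1 | ⟨h1, h2⟩
    · obtain ⟨r, hr1, hr2, hr3⟩ := hχ'' (Sum.inr j₀) q q' h1
      obtain ⟨w, hw⟩ := ShuffleAux.exists_colorB hχ a b hr3 i
      exact ⟨toLex ⟨r, w⟩, Sigma.Lex.lt_def.mpr (Or.inl hr1),
        Sigma.Lex.lt_def.mpr (Or.inl hr2), hw⟩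
    · dsimp only at h1
      subst h1
      obtain ⟨w, hw1, hw2, hw3⟩ := ShuffleAux.blockDense hχ a b i (χ'' q) v v' h2
      exact ⟨toLex ⟨q, w⟩, Sigma.Lex.lt_def.mpr (Or.inr ⟨rfl, hw1⟩),
        Sigma.Lex.lt_def.mpr (Or.inr ⟨rfl, hw2⟩), hw3⟩
  obtain ⟨e, he⟩ := ShuffleAux.iso_colored gdense hχ
  refine ⟨(((ShuffleAux.sigmaCongrIso
      (fun q => ShuffleAux.blockIso F χ a b (χ'' q))).trans
    (ShuffleAux.sigmaAssocIso
      (fun q (v : ShuffleAux.BIdx (s' := s') a b (χ'' q)) =>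
        F (ShuffleAux.colorB χ a b (χ'' q) v)))).trans
    (ShuffleAux.sigmaCongrIso (fun x => ShuffleAux.isoOfEq F (he x).symm))).trans
    (ShuffleAux.sigmaReindexIso e (fun q => F (χ q)))⟩
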